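/- For b ≤ -2 and any nonzero integer a, there exists k ≥ 1 such that S_{2,b}^k(a) lies in U_{2,b} = {u ∈ ℤ^+ : S_{2,b}^m(u) = u for some m ≥ 1}; i.e., every nonzero integer eventually enters a cycle under iteration of S_{2,b}. -/

import Mathlib

/-- The value of a digit list `L = [a₀, a₁, …, aₙ]` in base `b`: `Σ aᵢ bⁱ`. -/
def baseVal (b : ℤ) : List ℤ → ℤ
  | [] => 0
  | d :: L => d + b * baseVal b L

/-- `L` is the base-`b` digit expansion of `a`: digits in `[0, |b|-1]`,
leading (last) digit nonzero, with value `a`. -/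
def IsDigitExpansion (b a : ℤ) (L : List ℤ) : Prop :=
  (∀ d ∈ L, 0 ≤ d ∧ d ≤ |b| - 1) ∧ L ≠ [] ∧ L.getLast! ≠ 0 ∧ baseVal b L = a

/-- `S` is the function `S_{e,b}` sending `a` to the sum of `e`-th powers of its
base-`b` digits (and `0` to `0`). -/
def IsPowSumFun (e : ℕ) (b : ℤ) (S : ℤ → ℤ) : Prop :=
  S 0 = 0 ∧ ∀ a L, IsDigitExpansion b a L → S a = (L.map (· ^ e)).sum

/-!
Negative bases need no sign: every nonzero integer has a base-`b` expansion, so `S a ≥ 1`.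
An integer of absolute value at most `|b| ^ n` has an expansion with at most `n + 2` digits,
each contributing at most `(|b| - 1) ^ 2`; since `(n + 3) (|b| - 1) ^ 2 < |b| ^ max n 5`, this
gives `S y < max y (|b| ^ 5)` for `y > 0`. Hence every interval `[1, N]` with `N ≥ |b| ^ 5` is
`S`-invariant, and the orbit of `S a`, trapped in such a finite interval, is eventually periodic.
-/

open Function Set

theorem Set.MapsTo.exists_isPeriodicPt_iterate {α : Type*} {f : α → α} {s : Set α}
    (hs : s.Finite) (hf : MapsTo f s s) {x : α} (hx : x ∈ s) :
    ∃ i m : ℕ, 0 < m ∧ IsPeriodicPt f m (f^[i] x) := by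
  obtain ⟨i, j, hij, heq⟩ :=
    hs.exists_lt_map_eq_of_forall_mem (f := fun n ↦ f^[n] x) fun n ↦ hf.iterate n hx
  refine ⟨i, j - i, Nat.sub_pos_of_lt hij, ?_⟩
  rw [IsPeriodicPt, IsFixedPt, ← iterate_add_apply, Nat.sub_add_cancel hij.le]
  exact heq.symm

namespace IsDigitExpansion

variable {b a : ℤ} {L : List ℤ}

theorem singleton {d : ℤ} (h0 : 0 < d) (h1 : d ≤ |b| - 1) : IsDigitExpansion b d [d] :=
  ⟨fun x hx ↦ List.mem_singleton.1 hx ▸ ⟨h0.le, h1⟩, by simp, by simpa using h0.ne',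
    by simp [baseVal]⟩

theorem cons {q d : ℤ} (hL : IsDigitExpansion b q L) (h0 : 0 ≤ d) (h1 : d ≤ |b| - 1) :
    IsDigitExpansion b (d + b * q) (d :: L) := by
  obtain ⟨hdig, hne, hlast, hval⟩ := hL
  refine ⟨?_, List.cons_ne_nil d L, ?_, by rw [baseVal, hval]⟩
  · exact List.forall_mem_cons.2 ⟨⟨h0, h1⟩, hdig⟩
  · obtain ⟨y, t, rfl⟩ := List.exists_cons_of_ne_nil hne
    simpa [List.getLast!_cons_eq_getLastD] using hlast

theorem one_le_sum_map_pow (hL : IsDigitExpansion b a L) (e : ℕ) :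
    1 ≤ (L.map (· ^ e)).sum := by
  obtain ⟨hdig, hne, hlast, -⟩ := hL
  have hmem : L.getLast! ∈ L := by
    rw [List.getLast!_eq_getLast?_getD, List.getLast?_eq_some_getLast hne]
    exact List.getLast_mem hne
  have hd : 1 ≤ L.getLast! := lt_of_le_of_ne (hdig _ hmem).1 hlast.symm
  have hnonneg : ∀ x ∈ L.map (· ^ e), 0 ≤ x := by
    simp only [List.mem_map]
    rintro _ ⟨d, hd, rfl⟩
    exact pow_nonneg (hdig d hd).1 e
  calc (1 : ℤ) ≤ L.getLast! ^ e := one_le_pow₀ hd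
    _ ≤ (L.map (· ^ e)).sum := List.single_le_sum hnonneg _ (List.mem_map_of_mem hmem)

theorem sum_map_pow_le (hL : IsDigitExpansion b a L) (e : ℕ) :
    (L.map (· ^ e)).sum ≤ L.length * (|b| - 1) ^ e := by
  have h := List.sum_le_card_nsmul (L.map (· ^ e)) ((|b| - 1) ^ e) <| by
    simp only [List.mem_map]
    rintro _ ⟨d, hd, rfl⟩
    exact pow_le_pow_left₀ (hL.1 d hd).1 (hL.1 d hd).2 e
  simpa using h

end IsDigitExpansion

theorem exists_isDigitExpansion_length_le {b : ℤ} (hb : b ≤ -2) (n : ℕ) {a : ℤ} (ha : a ≠ 0)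
    (h : |a| ≤ (-b) ^ n) : ∃ L, IsDigitExpansion b a L ∧ L.length ≤ n + 2 := by
  have habs : |b| = -b := abs_of_neg (by omega)
  induction n generalizing a with
  | zero =>
    obtain rfl | rfl : a = 1 ∨ a = -1 := by rw [pow_zero, abs_le] at h; omega
    · exact ⟨[1], .singleton one_pos (by omega), by simp⟩
    · -- `-1 = (|b| - 1) + b` already needs two digits, whence the `+ 2`
      refine ⟨[-b - 1, 1], ?_, by simp⟩
      convert (IsDigitExpansion.singleton one_pos (by omega)).cons (d := -b - 1) (b := b)
        (by omega) (by omega) using 1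
      ring
  | succ n ih =>
    have hB : 0 < -b := by omega
    set d := a % (-b)
    set q := -(a / (-b))
    have hval : a = d + b * q := by have := Int.mul_ediv_add_emod a (-b); linarith
    have hd0 : 0 ≤ d := Int.emod_nonneg a hB.ne'
    have hd1 : d ≤ |b| - 1 := by have := Int.emod_lt_of_pos a hB; omega
    by_cases hq : q = 0
    · rw [hq, mul_zero, add_zero] at hval
      exact ⟨[d], by rw [hval]; exact .singleton (by omega) hd1, by simp⟩
    · have hqn : |q| ≤ (-b) ^ n := by
        rw [pow_succ, abs_le] at h
        rw [abs_le]
        have := Int.mul_ediv_add_emod a (-b)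
        constructor <;> nlinarith
      obtain ⟨L, hL, hlen⟩ := ih hq hqn
      exact ⟨d :: L, hval ▸ hL.cons hd0 hd1, by simpa using hlen⟩

theorem exists_isDigitExpansion {b : ℤ} (hb : b ≤ -2) {a : ℤ} (ha : a ≠ 0) :
    ∃ L, IsDigitExpansion b a L := by
  have h : |a| ≤ (-b) ^ a.natAbs :=
    calc |a| = a.natAbs := Int.abs_eq_natAbs a
      _ ≤ 2 ^ a.natAbs := by exact_mod_cast Nat.lt_two_pow_self.le
      _ ≤ (-b) ^ a.natAbs := pow_le_pow_left₀ (by norm_num) (by omega) _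
  obtain ⟨L, hL, -⟩ := exists_isDigitExpansion_length_le hb _ ha h
  exact ⟨L, hL⟩

theorem add_three_mul_sq_lt_pow_max {B : ℤ} (hB : 2 ≤ B) (n : ℕ) :
    (n + 3) * (B - 1) ^ 2 < B ^ max n 5 := by
  obtain ⟨m, hm⟩ : ∃ m, max n 5 = m + 5 := ⟨max n 5 - 5, by omega⟩
  have hn : (n : ℤ) + 3 ≤ 2 ^ (m + 3) := by
    have := Nat.lt_two_pow_self (n := m)
    have : n ≤ m + 5 := hm ▸ le_max_left n 5
    have : (n + 3 : ℕ) ≤ 2 ^ (m + 3) := by rw [pow_add]; omega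
    exact_mod_cast this
  calc (n + 3) * (B - 1) ^ 2 ≤ B ^ (m + 3) * (B - 1) ^ 2 := by
        gcongr
        exact hn.trans (pow_le_pow_left₀ (by norm_num) hB _)
    _ < B ^ (m + 3) * B ^ 2 := by gcongr <;> omega
    _ = B ^ max n 5 := by rw [hm, ← pow_add]

namespace IsPowSumFun

variable {e : ℕ} {b : ℤ} {S : ℤ → ℤ}

theorem one_le (hS : IsPowSumFun e b S) (hb : b ≤ -2) {a : ℤ} (ha : a ≠ 0) : 1 ≤ S a := by
  obtain ⟨L, hL⟩ := exists_isDigitExpansion hb ha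
  exact hS.2 a L hL ▸ hL.one_le_sum_map_pow e

theorem le_of_abs_le_pow (hS : IsPowSumFun e b S) (hb : b ≤ -2) {n : ℕ} {a : ℤ} (ha : a ≠ 0)
    (h : |a| ≤ (-b) ^ n) : S a ≤ (n + 2) * (-b - 1) ^ e := by
  obtain ⟨L, hL, hlen⟩ := exists_isDigitExpansion_length_le hb n ha h
  rw [hS.2 a L hL]
  calc (L.map (· ^ e)).sum ≤ L.length * (|b| - 1) ^ e := hL.sum_map_pow_le e
    _ ≤ (n + 2) * (-b - 1) ^ e := by
      rw [abs_of_neg (show b < 0 by omega)]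
      gcongr
      · exact pow_nonneg (by omega) e
      · exact_mod_cast hlen

theorem lt_max_pow_five (hS : IsPowSumFun 2 b S) (hb : b ≤ -2) {y : ℤ} (hy : 0 < y) :
    S y < max y ((-b) ^ 5) := by
  obtain ⟨n, hlow, hhigh⟩ := exists_nat_pow_near (show 1 ≤ y by omega) (show 1 < -b by omega)
  calc S y ≤ ((n + 1 : ℕ) + 2) * (-b - 1) ^ 2 :=
        hS.le_of_abs_le_pow hb hy.ne' ((abs_of_pos hy).trans_le hhigh.le)
    _ = (n + 3) * (-b - 1) ^ 2 := by push_cast; ring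
    _ < (-b) ^ max n 5 := add_three_mul_sq_lt_pow_max (by omega) n
    _ ≤ max y ((-b) ^ 5) := by
      rcases le_total n 5 with h | h
      · rw [max_eq_right h]; exact le_max_right _ _
      · rw [max_eq_left h]; exact hlow.trans (le_max_left _ _)

theorem mapsTo_Icc (hS : IsPowSumFun 2 b S) (hb : b ≤ -2) {N : ℤ} (hN : (-b) ^ 5 ≤ N) :
    MapsTo S (Icc 1 N) (Icc 1 N) := fun y ⟨hy1, hyN⟩ ↦
  ⟨hS.one_le hb (by omega), (hS.lt_max_pow_five hb (by omega)).le.trans (max_le hyN hN)⟩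

end IsPowSumFun

theorem eventually_enters_cycle (b : ℤ) (hb : b ≤ -2)
    (S : ℤ → ℤ) (hS : IsPowSumFun 2 b S) (a : ℤ) (ha : a ≠ 0) :
    ∃ k : ℕ, 1 ≤ k ∧ 0 < S^[k] a ∧ ∃ m : ℕ, 1 ≤ m ∧ S^[m] (S^[k] a) = S^[k] a := by
  have hSa : S a ∈ Icc 1 (max (S a) ((-b) ^ 5)) := ⟨hS.one_le hb ha, le_max_left _ _⟩
  have hmaps := hS.mapsTo_Icc hb (le_max_right (S a) _)
  obtain ⟨i, m, hm, hper⟩ := hmaps.exists_isPeriodicPt_iterate (finite_Icc _ _) hSa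
  have hk : S^[i + 1] a = S^[i] (S a) := iterate_succ_apply S i a
  refine ⟨i + 1, by omega, ?_, m, hm, ?_⟩
  · rw [hk]; exact (hmaps.iterate i hSa).1
  · rw [hk]; exact hper
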